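/- arXiv:1707.06059 — 2 statements merged into one kernel-verified Lean document; each statement's English description precedes it below -/
import Mathlib

section
/- For every x in (0,1], liminf_{n→∞} S_n(x)/2^n ≤ 1, where S_n is the Birkhoff sum of the Saint-Petersburg potential under the doubling map. -/
open Filter Set MeasureTheory
open scoped ENNReal Classical

/-- The doubling map on `(0,1]`. -/
noncomputable def T (x : ℝ) : ℝ := 2 * x - ⌈2 * x⌉ + 1

/-- The Saint-Petersburg potential: `phi x = 2^k` for `x ∈ (2^{-k-1}, 2^{-k}]`. -/
noncomputable def phi (x : ℝ) : ℝ := 2 ^ ⌊Real.logb 2 x⁻¹⌋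

/-- Birkhoff sums of the Saint-Petersburg potential under the doubling map. -/
noncomputable def S (n : ℕ) (x : ℝ) : ℝ := ∑ j ∈ Finset.range n, phi (T^[j] x)

/-- The `n`-th binary digit of `x` (for `n ≥ 1`): `eps n x = ⌈2 T^{n-1} x⌉ - 1`. -/
noncomputable def eps (n : ℕ) (x : ℝ) : ℤ := ⌈2 * T^[n-1] x⌉ - 1

/-!
While an orbit point stays in `(0, 1/2]`, the doubling map really doubles it and `phi` halves, so
`phi x ≤ 2 * phi (T x)` on `(0,1]`. Hence if `T^[n] x > 1/2` (the `n+1`-st binary digit of `x` is 1),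
then `phi (T^[j] x) ≤ 2^(n-j)` for `j ≤ n` and `S (n+1) x ≤ 2^(n+1) - 1`. Every `x ∈ (0,1]` has
infinitely many such `n`, since otherwise its orbit would eventually double forever.
-/

lemma T_of_le_half {x : ℝ} (h0 : 0 < x) (h1 : x ≤ 1 / 2) : T x = 2 * x := by
  have : ⌈2 * x⌉ = 1 := by rw [Int.ceil_eq_iff]; constructor <;> push_cast <;> linarith
  rw [T, this]; push_cast; ring

lemma T_of_half_lt {x : ℝ} (h0 : 1 / 2 < x) (h1 : x ≤ 1) : T x = 2 * x - 1 := by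
  have : ⌈2 * x⌉ = 2 := by rw [Int.ceil_eq_iff]; constructor <;> push_cast <;> linarith
  rw [T, this]; push_cast; ring

lemma mapsTo_T : MapsTo T (Ioc 0 1) (Ioc 0 1) := by
  rintro x ⟨h0, h1⟩
  rcases le_or_gt x (1 / 2) with h | h
  · rw [T_of_le_half h0 h]; constructor <;> linarith
  · rw [T_of_half_lt h h1]; constructor <;> linarith

lemma phi_of_half_lt {x : ℝ} (h0 : 1 / 2 < x) (h1 : x ≤ 1) : phi x = 1 := by
  have hx : 0 < x := by linarith
  have : ⌊Real.logb 2 x⁻¹⌋ = 0 := by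
    rw [Int.floor_eq_zero_iff]
    constructor
    · exact Real.logb_nonneg one_lt_two (one_le_inv_iff₀.mpr ⟨hx, h1⟩)
    · rw [Real.logb_lt_iff_lt_rpow one_lt_two (by positivity), inv_lt_comm₀ hx (by norm_num)]
      norm_num; linarith
  rw [phi, this, zpow_zero]

lemma one_le_phi {x : ℝ} (hx : x ∈ Ioc (0 : ℝ) 1) : 1 ≤ phi x := by
  have : 0 ≤ ⌊Real.logb 2 x⁻¹⌋ :=
    Int.floor_nonneg.mpr (Real.logb_nonneg one_lt_two (one_le_inv_iff₀.mpr hx))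
  exact one_le_zpow₀ one_le_two this

lemma phi_eq_two_mul_phi_two_mul {x : ℝ} (hx : 0 < x) : phi x = 2 * phi (2 * x) := by
  have : x⁻¹ = 2 * (2 * x)⁻¹ := by field_simp
  rw [phi, phi, this, Real.logb_mul two_ne_zero (by positivity), Real.logb_self_eq_one one_lt_two,
    add_comm, Int.floor_add_one, zpow_add_one₀ two_ne_zero, mul_comm]

lemma phi_le_two_mul_phi_T {x : ℝ} (hx : x ∈ Ioc (0 : ℝ) 1) : phi x ≤ 2 * phi (T x) := by
  rcases le_or_gt x (1 / 2) with h | h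
  · rw [T_of_le_half hx.1 h, phi_eq_two_mul_phi_two_mul hx.1]
  · rw [phi_of_half_lt h hx.2]
    linarith [one_le_phi (mapsTo_T hx)]

lemma phi_le_two_pow_mul_phi_iterate {x : ℝ} (hx : x ∈ Ioc (0 : ℝ) 1) (n : ℕ) :
    phi x ≤ 2 ^ n * phi (T^[n] x) := by
  induction n with
  | zero => simp
  | succ n ih =>
    calc phi x ≤ 2 ^ n * phi (T^[n] x) := ih
      _ ≤ 2 ^ n * (2 * phi (T (T^[n] x))) := by
        gcongr; exact phi_le_two_mul_phi_T (mapsTo_T.iterate n hx)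
      _ = 2 ^ (n + 1) * phi (T^[n + 1] x) := by
        rw [Function.iterate_succ_apply', pow_succ, mul_assoc]

lemma S_succ (n : ℕ) (x : ℝ) : S (n + 1) x = phi x + S n (T x) := by
  simp only [S, Finset.sum_range_succ', Function.iterate_succ_apply, Function.iterate_zero_apply]
  ring

lemma S_succ_le {x : ℝ} (hx : x ∈ Ioc (0 : ℝ) 1) (n : ℕ) :
    S (n + 1) x ≤ (2 ^ (n + 1) - 1) * phi (T^[n] x) := by
  induction n generalizing x with
  | zero => norm_num [S]
  | succ n ih =>
    have hphi := phi_le_two_pow_mul_phi_iterate hx (n + 1)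
    have hS : S (n + 1) (T x) ≤ (2 ^ (n + 1) - 1) * phi (T^[n + 1] x) := ih (mapsTo_T hx)
    rw [S_succ, pow_succ _ (n + 1)]
    linarith

lemma S_succ_le_two_pow_of_half_lt {x : ℝ} (hx : x ∈ Ioc (0 : ℝ) 1) {n : ℕ}
    (hn : 1 / 2 < T^[n] x) : S (n + 1) x ≤ 2 ^ (n + 1) := by
  have := S_succ_le hx n
  rw [phi_of_half_lt hn (mapsTo_T.iterate n hx).2, mul_one] at this
  linarith

lemma iterate_T_eq_two_pow_mul {x : ℝ} (hx : 0 < x) {k : ℕ}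
    (hsmall : ∀ j < k, T^[j] x ≤ 1 / 2) : T^[k] x = 2 ^ k * x := by
  induction k with
  | zero => simp
  | succ k ih =>
    have ih := ih fun j hj => hsmall j (by omega)
    rw [Function.iterate_succ_apply', ih, T_of_le_half (by positivity) (ih ▸ hsmall k k.lt_succ_self)]
    ring

lemma frequently_half_lt_iterate_T {x : ℝ} (hx : x ∈ Ioc (0 : ℝ) 1) :
    ∃ᶠ n in atTop, 1 / 2 < T^[n] x := by
  by_contra h
  obtain ⟨N, hN⟩ := eventually_atTop.mp (not_frequently.mp h)
  set y := T^[N] x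
  have hy := mapsTo_T.iterate N hx
  obtain ⟨k, hk⟩ := pow_unbounded_of_one_lt y⁻¹ one_lt_two
  have hgrow : T^[k] y = 2 ^ k * y := iterate_T_eq_two_pow_mul hy.1 fun j _ => by
    rw [← Function.iterate_add_apply]
    exact not_lt.mp (hN _ (by omega))
  have hle : T^[k] y ≤ 1 := (mapsTo_T.iterate k hy).2
  rw [hgrow] at hle
  rw [inv_lt_iff_one_lt_mul₀ hy.1] at hk
  linarith

theorem saint_petersburg_stmt2 (x : ℝ) (hx : x ∈ Set.Ioc (0 : ℝ) 1) :
    Filter.liminf (fun n : ℕ => S n x / 2 ^ n) Filter.atTop ≤ 1 := by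
  have hfreq : ∃ᶠ n in atTop, S (n + 1) x / 2 ^ (n + 1) ≤ 1 :=
    (frequently_half_lt_iterate_T hx).mono fun n hn =>
      (div_le_one (by positivity)).mpr (S_succ_le_two_pow_of_half_lt hx hn)
  refine liminf_le_of_frequently_le ((tendsto_add_atTop_nat 1).frequently hfreq) ?_
  refine isBoundedUnder_of_eventually_ge (a := 0) (Eventually.of_forall fun n => ?_)
  have : 0 ≤ S n x := Finset.sum_nonneg fun j _ => by unfold phi; positivity
  positivity
end

section
/- Let Ψ(n) = 2^{n^γ} with 1/2 ≤ γ < 1. Then for every β ∈ (0, ∞), the set E_Ψ(β) = {x ∈ (0,1] : lim_{n→∞} S_n(x)/Ψ(n) = β} is empty. -/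
open Filter Set MeasureTheory
open scoped ENNReal Classical

/-!
If `S n x ~ β 2^{n^γ}`, then, since `2^{(n+1)^γ} / 2^{n^γ} → 1`, the increments `φ(T^n x)` are
`o(2^{n^γ})`. A block of `k` zeros in the binary expansion starting at time `j` makes
`S_{j+k+1} - S_j = 2^{k+1} - 1 ≤ 2 φ(T^j x)`, hence eventually
`2^{(j+k+1)^γ} < 2^{1/4} 2^{j^γ}`; concavity of `t ↦ t^γ` and `γ ≥ 1/2` turn this into
`k ≤ j^γ / 2`. So eventually every term of `S n x` is at most `2^{n^γ/2}`, whence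
`S n x = O(1) + n 2^{n^γ/2} = o(2^{n^γ})`, contradicting `β > 0`.
-/

open scoped Topology

/-- The graph of the concave `t ↦ t ^ p` lies below its tangent at `c`. -/
lemma rpow_le_rpow_add_mul_sub {p a c : ℝ} (hp0 : 0 ≤ p) (hp1 : p ≤ 1) (ha : 0 ≤ a) (hc : 0 < c) :
    a ^ p ≤ c ^ p + p * c ^ (p - 1) * (a - c) := by
  have hbern := rpow_one_add_le_one_add_mul_self (s := a / c - 1)
    (by linarith [div_nonneg ha hc.le]) hp0 hp1
  rw [add_sub_cancel, Real.div_rpow ha hc.le, div_le_iff₀ (by positivity)] at hbern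
  rw [Real.rpow_sub hc, Real.rpow_one]
  calc a ^ p ≤ (1 + p * (a / c - 1)) * c ^ p := hbern
    _ = c ^ p + p * (c ^ p / c) * (a - c) := by field_simp

lemma tendsto_succ_rpow_sub_rpow {γ : ℝ} (hγ0 : 0 ≤ γ) (hγ1 : γ < 1) :
    Tendsto (fun n : ℕ => ((n : ℝ) + 1) ^ γ - (n : ℝ) ^ γ) atTop (𝓝 0) := by
  have hbound : Tendsto (fun n : ℕ => γ * (n : ℝ) ^ (γ - 1)) atTop (𝓝 0) := by
    have := (tendsto_rpow_neg_atTop (by linarith : 0 < 1 - γ)).comp tendsto_natCast_atTop_atTop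
    simpa [Function.comp_def] using this.const_mul γ
  refine squeeze_zero' (Eventually.of_forall fun n => ?_) ?_ hbound
  · exact sub_nonneg.2 (Real.rpow_le_rpow (Nat.cast_nonneg n) (by linarith) hγ0)
  · filter_upwards [eventually_ge_atTop 1] with n hn
    have := rpow_le_rpow_add_mul_sub hγ0 hγ1.le (by positivity : (0 : ℝ) ≤ n + 1)
      (Nat.cast_pos.2 hn : (0 : ℝ) < n)
    linarith

lemma tendsto_two_rpow_succ_div {γ : ℝ} (hγ0 : 0 ≤ γ) (hγ1 : γ < 1) :
    Tendsto (fun n : ℕ => (2 : ℝ) ^ (((n + 1 : ℕ) : ℝ) ^ γ) / 2 ^ ((n : ℝ) ^ γ)) atTop (𝓝 1) := by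
  have h := ((Real.continuous_const_rpow two_ne_zero).tendsto 0).comp
    (tendsto_succ_rpow_sub_rpow hγ0 hγ1)
  rw [Real.rpow_zero] at h
  refine h.congr fun n => ?_
  simp only [Function.comp_apply, Real.rpow_sub two_pos, Nat.cast_succ]

lemma tendsto_succ_sub_div {s Ψ : ℕ → ℝ} {β : ℝ} (hΨ : ∀ n, Ψ n ≠ 0)
    (hs : Tendsto (fun n => s n / Ψ n) atTop (𝓝 β))
    (hratio : Tendsto (fun n => Ψ (n + 1) / Ψ n) atTop (𝓝 1)) :
    Tendsto (fun n => (s (n + 1) - s n) / Ψ n) atTop (𝓝 0) := by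
  have h := ((hs.comp (tendsto_add_atTop_nat 1)).mul hratio).sub hs
  rw [mul_one, sub_self] at h
  refine h.congr fun n => ?_
  simp only [Function.comp_apply]
  field_simp [hΨ n, hΨ (n + 1)]

lemma eventually_lt_mul_of_le_add {s g Ψ : ℕ → ℝ} {m : ℕ → ℕ} {β r : ℝ} (hβ : 0 < β) (hr : 1 < r)
    (hΨ : ∀ n, 0 < Ψ n) (hs : Tendsto (fun n => s n / Ψ n) atTop (𝓝 β))
    (hg : Tendsto (fun n => g n / Ψ n) atTop (𝓝 0)) (hm : Tendsto m atTop atTop)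
    (hsm : ∀ j, s (m j) ≤ s j + g j) :
    ∀ᶠ j in atTop, Ψ (m j) < r * Ψ j := by
  have hv := hs.comp hm
  have hw : Tendsto (fun j => (s j + g j) / Ψ j) atTop (𝓝 β) := by
    simpa only [add_div, add_zero] using hs.add hg
  have hquot := hw.div hv hβ.ne'
  rw [div_self hβ.ne'] at hquot
  filter_upwards [hv.eventually (lt_mem_nhds hβ), hquot.eventually (gt_mem_nhds hr)]
    with j hvpos hlt
  simp only [Pi.div_apply, Function.comp_apply] at hvpos hlt
  set v := s (m j) / Ψ (m j)
  have hsmv : s (m j) = Ψ (m j) * v := by simp only [v]; field_simp [(hΨ (m j)).ne']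
  rw [div_lt_iff₀ hvpos, div_lt_iff₀ (hΨ j)] at hlt
  refine lt_of_mul_lt_mul_right ?_ hvpos.le
  linarith [hsm j]

lemma tendsto_mul_two_rpow_div {γ c : ℝ} (hγ : 0 < γ) (hc : c < 1) :
    Tendsto (fun x : ℝ => x * 2 ^ (c * x ^ γ) / 2 ^ (x ^ γ)) atTop (𝓝 0) := by
  have h := (tendsto_rpow_mul_exp_neg_mul_atTop_nhds_zero γ⁻¹ ((1 - c) * Real.log 2)
    (by have := Real.log_pos one_lt_two; nlinarith)).comp (tendsto_rpow_atTop hγ)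
  refine h.congr' ?_
  filter_upwards [eventually_ge_atTop 0] with x hx
  simp only [Function.comp_apply, Real.rpow_rpow_inv hx hγ.ne', Real.rpow_def_of_pos two_pos,
    mul_div_assoc, ← Real.exp_sub]
  ring_nf

lemma tendsto_sum_div_two_rpow {f : ℕ → ℝ} {γ c : ℝ} (hγ : 0 < γ) (hc0 : 0 ≤ c) (hc1 : c < 1)
    (hf0 : ∀ j, 0 ≤ f j) (hf : ∀ᶠ j in atTop, f j ≤ 2 ^ (c * (j : ℝ) ^ γ)) :
    Tendsto (fun n : ℕ => (∑ j ∈ Finset.range n, f j) / 2 ^ ((n : ℝ) ^ γ)) atTop (𝓝 0) := by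
  obtain ⟨N, hN⟩ := eventually_atTop.1 hf
  have hgrowth : Tendsto (fun n : ℕ => (2 : ℝ) ^ ((n : ℝ) ^ γ)) atTop atTop :=
    (tendsto_rpow_atTop_of_base_gt_one _ one_lt_two).comp
      ((tendsto_rpow_atTop hγ).comp tendsto_natCast_atTop_atTop)
  have hbound : Tendsto (fun n : ℕ => (∑ j ∈ Finset.range N, f j) / 2 ^ ((n : ℝ) ^ γ)
      + n * 2 ^ (c * (n : ℝ) ^ γ) / 2 ^ ((n : ℝ) ^ γ)) atTop (𝓝 0) := by
    simpa using (hgrowth.const_div_atTop _).add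
      ((tendsto_mul_two_rpow_div hγ hc1).comp tendsto_natCast_atTop_atTop)
  refine squeeze_zero' (Eventually.of_forall fun n =>
    div_nonneg (Finset.sum_nonneg fun j _ => hf0 j) (by positivity)) ?_ hbound
  filter_upwards [eventually_ge_atTop N] with n hn
  rw [← add_div]
  gcongr
  rw [← Finset.sum_range_add_sum_Ico _ hn]
  gcongr
  calc ∑ j ∈ Finset.Ico N n, f j ≤ ∑ _j ∈ Finset.Ico N n, (2 : ℝ) ^ (c * (n : ℝ) ^ γ) :=
        Finset.sum_le_sum fun j hj => (hN j (Finset.mem_Ico.1 hj).1).trans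
          (Real.rpow_le_rpow_of_exponent_le one_le_two (by
            gcongr; exact_mod_cast (Finset.mem_Ico.1 hj).2.le))
    _ ≤ n * 2 ^ (c * (n : ℝ) ^ γ) := by
        rw [Finset.sum_const, Nat.card_Ico, nsmul_eq_mul]
        gcongr
        exact_mod_cast Nat.sub_le n N

lemma le_of_rpow_add_le_rpow_add {γ a b δ : ℝ} (hγ1 : 1 / 2 ≤ γ) (hγ2 : γ ≤ 1) (ha : 1 ≤ a)
    (hb : 0 ≤ b) (h : (a + b) ^ γ ≤ a ^ γ + δ) :
    b ≤ 2 * δ * (a ^ γ + δ) := by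
  have hu : 1 ≤ a + b := by linarith
  have hu0 : 0 < a + b := by linarith
  have htangent := rpow_le_rpow_add_mul_sub (by linarith) hγ2 (by linarith) hu0 (a := a)
  have hcancel : (a + b) ^ (γ - 1) * (a + b) ^ (1 - γ) = 1 := by
    rw [← Real.rpow_add hu0, sub_add_sub_cancel', sub_self, Real.rpow_zero]
  have hslope : γ * b * (a + b) ^ (γ - 1) ≤ δ := by linarith
  have hδ : 0 ≤ δ := le_trans (by positivity) hslope
  calc b ≤ 2 * (γ * b) := by nlinarith
    _ = 2 * (γ * b * (a + b) ^ (γ - 1) * (a + b) ^ (1 - γ)) := by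
        rw [mul_assoc _ _ (_ ^ (1 - γ)), hcancel, mul_one]
    _ ≤ 2 * (δ * (a + b) ^ γ) := by
        gcongr
        linarith
    _ ≤ 2 * δ * (a ^ γ + δ) := by nlinarith

lemma T_mem_Ioc (x : ℝ) : T x ∈ Ioc (0 : ℝ) 1 := by
  unfold T
  constructor <;> linarith [Int.ceil_lt_add_one (2 * x), Int.le_ceil (2 * x)]

lemma iterate_T_mem_Ioc {x : ℝ} (hx : x ∈ Ioc (0 : ℝ) 1) : ∀ j, T^[j] x ∈ Ioc (0 : ℝ) 1
  | 0 => hx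
  | j + 1 => by rw [Function.iterate_succ_apply']; exact T_mem_Ioc _

lemma phi_pos (x : ℝ) : 0 < phi x := zpow_pos two_pos _

lemma S_add (m n : ℕ) (x : ℝ) : S (m + n) x = S m x + S n (T^[m] x) := by
  rw [S, S, S, Finset.sum_range_add]
  congr 1
  exact Finset.sum_congr rfl fun i _ => by rw [← Function.iterate_add_apply, add_comm]

lemma S_succ_sub (n : ℕ) (x : ℝ) : S (n + 1) x - S n x = phi (T^[n] x) := by
  simp only [S, Finset.sum_range_succ, add_sub_cancel_left]

/-- For `y ∈ (0,1]`, the `k` with `y ∈ (2^{-k-1}, 2^{-k}]`. -/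
noncomputable def leadingZeros (y : ℝ) : ℕ := (⌊Real.logb 2 y⁻¹⌋).toNat

lemma phi_eq_two_pow_leadingZeros {y : ℝ} (hy : y ∈ Ioc (0 : ℝ) 1) :
    phi y = 2 ^ leadingZeros y := by
  have h : 0 ≤ ⌊Real.logb 2 y⁻¹⌋ :=
    Int.floor_nonneg.2 (Real.logb_nonneg one_lt_two ((one_le_inv₀ hy.1).2 hy.2))
  rw [phi, leadingZeros, ← zpow_natCast, Int.toNat_of_nonneg h]

lemma leadingZeros_two_mul {y : ℝ} (hy : 0 < y) :
    leadingZeros (2 * y) = leadingZeros y - 1 := by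
  have h : Real.logb 2 (2 * y)⁻¹ = Real.logb 2 y⁻¹ - (1 : ℤ) := by
    rw [mul_inv, Real.logb_mul (by norm_num) (by positivity), Real.logb_inv,
      Real.logb_self_eq_one one_lt_two]
    push_cast; ring
  rw [leadingZeros, leadingZeros, h, Int.floor_sub_intCast]
  omega

lemma T_eq_two_mul_of_leadingZeros_pos {y : ℝ} (hy : y ∈ Ioc (0 : ℝ) 1)
    (hk : 0 < leadingZeros y) : T y = 2 * y := by
  have hlog : (1 : ℝ) ≤ Real.logb 2 y⁻¹ := by
    have : (1 : ℤ) ≤ ⌊Real.logb 2 y⁻¹⌋ := by unfold leadingZeros at hk; omega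
    exact_mod_cast Int.le_floor.1 this
  have hy2 : 2 * y ≤ 1 := by
    rw [Real.le_logb_iff_rpow_le one_lt_two (inv_pos.2 hy.1), Real.rpow_one,
      le_inv_comm₀ two_pos hy.1] at hlog
    linarith
  have hceil : ⌈2 * y⌉ = 1 :=
    Int.ceil_eq_iff.2 ⟨by push_cast; linarith [hy.1], by push_cast; linarith⟩
  rw [T, hceil]; push_cast; ring

lemma leadingZeros_iterate_T {y : ℝ} (hy : y ∈ Ioc (0 : ℝ) 1) {j : ℕ} (hj : j ≤ leadingZeros y) :
    leadingZeros (T^[j] y) = leadingZeros y - j := by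
  induction j with
  | zero => rfl
  | succ j ih =>
    have hpos : 0 < leadingZeros (T^[j] y) := by rw [ih (by omega)]; omega
    rw [Function.iterate_succ_apply',
      T_eq_two_mul_of_leadingZeros_pos (iterate_T_mem_Ioc hy j) hpos,
      leadingZeros_two_mul (iterate_T_mem_Ioc hy j).1, ih (by omega)]
    omega

lemma S_leadingZeros_succ {y : ℝ} (hy : y ∈ Ioc (0 : ℝ) 1) :
    S (leadingZeros y + 1) y = 2 * phi y - 1 := by
  have hterm : ∀ j ∈ Finset.range (leadingZeros y + 1),
      phi (T^[j] y) = 2 ^ (leadingZeros y + 1 - 1 - j) := fun j hj => by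
    rw [phi_eq_two_pow_leadingZeros (iterate_T_mem_Ioc hy j),
      leadingZeros_iterate_T hy (Nat.lt_succ_iff.1 (Finset.mem_range.1 hj))]
    rfl
  rw [S, Finset.sum_congr rfl hterm, Finset.sum_range_reflect (fun j => (2 : ℝ) ^ j),
    geom_sum_eq (by norm_num), phi_eq_two_pow_leadingZeros hy]
  ring

lemma eventually_leadingZeros_iterate_le {γ β x : ℝ} (hγ1 : 1 / 2 ≤ γ) (hγ2 : γ < 1) (hβ : 0 < β)
    (hx : x ∈ Ioc (0 : ℝ) 1)
    (hlim : Tendsto (fun n : ℕ => S n x / (2 : ℝ) ^ ((n : ℝ) ^ γ)) atTop (𝓝 β)) :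
    ∀ᶠ j : ℕ in atTop, (leadingZeros (T^[j] x) : ℝ) ≤ (j : ℝ) ^ γ / 2 := by
  have hΨ : ∀ n : ℕ, 0 < (2 : ℝ) ^ ((n : ℝ) ^ γ) := fun n => by positivity
  have hincr := tendsto_succ_sub_div (fun n => (hΨ n).ne') hlim
    (tendsto_two_rpow_succ_div (by linarith) hγ2)
  have hrun := eventually_lt_mul_of_le_add hβ
    (Real.one_lt_rpow one_lt_two (by norm_num : (0 : ℝ) < 1 / 4)) hΨ hlim
    (g := fun j => 2 * (S (j + 1) x - S j x))
    (by simpa only [mul_div_assoc, mul_zero] using hincr.const_mul 2)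
    (m := fun j => j + (leadingZeros (T^[j] x) + 1))
    (tendsto_atTop_mono (fun j => Nat.le_add_right _ _) tendsto_id)
    (fun j => by
      rw [S_add, S_leadingZeros_succ (iterate_T_mem_Ioc hx j), ← S_succ_sub]
      linarith)
  filter_upwards [hrun, eventually_ge_atTop 1] with j hj hj1
  rw [← Real.rpow_add two_pos, Real.rpow_lt_rpow_left_iff one_lt_two] at hj
  push_cast at hj
  have hrunLength := le_of_rpow_add_le_rpow_add (δ := 1 / 4) hγ1 hγ2.le (Nat.one_le_cast.2 hj1)
    (by positivity : (0 : ℝ) ≤ leadingZeros (T^[j] x) + 1) (by linarith)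
  have hpos : 0 ≤ (j : ℝ) ^ γ := by positivity
  linarith

theorem saint_petersburg_stmt13 (γ : ℝ) (hγ1 : 1 / 2 ≤ γ) (hγ2 : γ < 1)
    (β : ℝ) (hβ : 0 < β) :
    {x : ℝ | x ∈ Set.Ioc (0 : ℝ) 1 ∧
      Filter.Tendsto (fun n : ℕ => S n x / (2 : ℝ) ^ ((n : ℝ) ^ γ))
        Filter.atTop (nhds β)} = ∅ := by
  refine eq_empty_of_forall_notMem fun x ⟨hx, hlim⟩ => hβ.ne' ?_
  have hphi : ∀ᶠ j : ℕ in atTop, phi (T^[j] x) ≤ 2 ^ ((1 / 2) * (j : ℝ) ^ γ) := by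
    filter_upwards [eventually_leadingZeros_iterate_le hγ1 hγ2 hβ hx hlim] with j hj
    rw [phi_eq_two_pow_leadingZeros (iterate_T_mem_Ioc hx j), ← Real.rpow_natCast]
    exact Real.rpow_le_rpow_of_exponent_le one_le_two (by linarith)
  exact tendsto_nhds_unique hlim
    (tendsto_sum_div_two_rpow (by linarith) (by norm_num) (by norm_num)
      (fun j => (phi_pos _).le) hphi)
end
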